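/- For every n ≥ 1 the identities S'_{n+1} = P_n S_{n+1} + S'_n and S_{n+1} = Q_n S'_n − S_n hold in ℚ[T], where P_n = T^{(3ℓ_n+ℓ_{n−1}+3)/2}(T^{ℓ_{n+1}+1} + 1) and Q_n = T^{(ℓ_n+ℓ_{n−1}+3)/2}. -/

import Mathlib

/-- The sequence `ℓ n` defined by `ℓ 0 = 0`, `ℓ 1 = 1` and
`ℓ (n+1) = 2 ℓ n + ℓ (n-1) + 2` for `n ≥ 1`. -/
def ell : ℕ → ℕ
  | 0 => 0
  | 1 => 1
  | (n+2) => 2 * ell (n+1) + ell n + 2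

/-- `S n = T^((ℓ n + ℓ (n-1) + 3)/2) (T^(ℓ n + 1) - 1) ∈ ℚ[T]`. -/
noncomputable def S (n : ℕ) : Polynomial ℚ :=
  Polynomial.X ^ ((ell n + ell (n-1) + 3) / 2) * (Polynomial.X ^ (ell n + 1) - 1)

/-- `S' n = T^(3 ℓ n + ℓ (n-1) + 4) - 1 ∈ ℚ[T]`. -/
noncomputable def S' (n : ℕ) : Polynomial ℚ :=
  Polynomial.X ^ (3 * ell n + ell (n-1) + 4) - 1

/-- `P n = T^((3 ℓ n + ℓ (n-1) + 3)/2) (T^(ℓ (n+1) + 1) + 1) ∈ ℚ[T]`. -/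
noncomputable def P (n : ℕ) : Polynomial ℚ :=
  Polynomial.X ^ ((3 * ell n + ell (n-1) + 3) / 2) * (Polynomial.X ^ (ell (n+1) + 1) + 1)

/-- `Q n = T^((ℓ n + ℓ (n-1) + 3)/2) ∈ ℚ[T]`. -/
noncomputable def Q (n : ℕ) : Polynomial ℚ :=
  Polynomial.X ^ ((ell n + ell (n-1) + 3) / 2)

/-! Since `ℓ n + ℓ (n-1)` is odd, all the halved exponents are exact. Writing `a = ℓ n` and
`2q = ℓ n + ℓ (n-1) + 3`, every exponent is a linear form in `a` and `q`, and the two recurrences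
become identities between sums of powers of `T` that hold in any commutative ring. -/

theorem ell_succ_succ (n : ℕ) : ell (n + 2) = 2 * ell (n + 1) + ell n + 2 := rfl

theorem odd_ell_succ_add_ell (n : ℕ) : Odd (ell (n + 1) + ell n) := by
  induction n with
  | zero => exact odd_one
  | succ k ih =>
    obtain ⟨j, hj⟩ := ih
    exact ⟨ell (k + 1) + j + 1, by rw [ell_succ_succ]; omega⟩

section Identities

variable {R : Type*} [CommRing R] (x : R) (a q : ℕ)

theorem pow_sub_one_eq_S'_step :
    x ^ (4 * a + 6 * q + 1) - 1 =
      x ^ (a + q) * (x ^ (a + 2 * q) + 1) * (x ^ (a + q + 1) * (x ^ (a + 2 * q) - 1)) +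
        (x ^ (2 * a + 2 * q + 1) - 1) := by
  ring

theorem pow_mul_pow_sub_one_eq_S_step :
    x ^ (a + q + 1) * (x ^ (a + 2 * q) - 1) =
      x ^ q * (x ^ (2 * a + 2 * q + 1) - 1) - x ^ q * (x ^ (a + 1) - 1) := by
  ring

end Identities

/-- For every `n ≥ 1`, `S' (n+1) = P n · S (n+1) + S' n` and
`S (n+1) = Q n · S' n - S n` in `ℚ[T]`. -/
theorem S_recurrences (n : ℕ) (hn : 1 ≤ n) :
    S' (n+1) = P n * S (n+1) + S' n ∧ S (n+1) = Q n * S' n - S n := by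
  obtain ⟨m, rfl⟩ := Nat.exists_eq_add_of_le' hn
  obtain ⟨j, hj⟩ := odd_ell_succ_add_ell m
  set a := ell (m + 1)
  set q := j + 2
  simp only [S, S', P, Q, ell_succ_succ, Nat.add_sub_cancel]
  rw [show (a + ell m + 3) / 2 = q by omega, show (3 * a + ell m + 3) / 2 = a + q by omega,
    show (2 * a + ell m + 2 + a + 3) / 2 = a + q + 1 by omega,
    show 2 * a + ell m + 2 + 1 = a + 2 * q by omega,
    show 3 * a + ell m + 4 = 2 * a + 2 * q + 1 by omega,
    show 3 * (2 * a + ell m + 2) + a + 4 = 4 * a + 6 * q + 1 by omega]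
  exact ⟨pow_sub_one_eq_S'_step _ a q, pow_mul_pow_sub_one_eq_S_step _ a q⟩
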